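/- The polynomial P(x) = (x,x')^8 - (7/15)(x,x')^6(x',x')(x,x) + (7/116)(x,x')^4(x',x')^2(x,x)^2 - (1/464)(x,x')^2(x',x')^3(x,x)^3 + (1/100224)(x',x')^4(x,x)^4 on R^48 is harmonic for every fixed x' ∈ R^48. -/

import Mathlib

/-!
Write `t = ⟪x, a⟫` and `s = ⟪x, x⟫`. Differentiating `t ^ m * s ^ k` twice along each vector of an
orthonormal basis of an `n`-dimensional space and summing with Parseval's identity gives
`Δ (t ^ m * s ^ k) = m (m - 1) ⟪a, a⟫ t ^ (m - 2) s ^ k + (4 m k + 2 n k + 4 k (k - 1)) t ^ m s ^ (k - 1)`.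
With `a = x'`, `P` is a combination of the monomials `⟪a, a⟫ ^ k t ^ (8 - 2k) s ^ k`, and its coefficients are the
ones for which these contributions cancel in dimension `n = 48`.
-/

open scoped RealInnerProductSpace
open InnerProductSpace Laplacian Module

theorem Nat.cast_mul_cast_sub_one {R : Type*} [Ring R] (m : ℕ) :
    (m : R) * ((m - 1 : ℕ) : R) = m * (m - 1) := by
  cases m <;> simp

section InnerMonomial

variable {E : Type*} [NormedAddCommGroup E] [InnerProductSpace ℝ E]

theorem OrthonormalBasis.sum_inner_mul_inner_real {ι : Type*} [Fintype ι]
    (b : OrthonormalBasis ι ℝ E) (x y : E) : ∑ i, ⟪x, b i⟫ * ⟪y, b i⟫ = ⟪x, y⟫ := by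
  simpa only [real_inner_comm y] using b.sum_inner_mul_inner x y

def innerMonomial (a : E) (m k : ℕ) (x : E) : ℝ := ⟪x, a⟫ ^ m * ⟪x, x⟫ ^ k

theorem hasFDerivAt_inner_const_right (a y : E) :
    HasFDerivAt (fun z : E => ⟪z, a⟫) (innerSL ℝ a) y :=
  (innerSL ℝ a).hasFDerivAt.congr_of_eventuallyEq
    (Filter.Eventually.of_forall fun z => real_inner_comm a z)

theorem hasFDerivAt_inner_self (y : E) :
    HasFDerivAt (fun z : E => ⟪z, z⟫) ((2 : ℝ) • innerSL ℝ y) y := by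
  refine ((hasFDerivAt_id y).inner ℝ (hasFDerivAt_id y)).congr_fderiv ?_
  ext v
  simp [real_inner_comm, two_smul]

@[fun_prop]
theorem contDiff_innerMonomial (a : E) (m k : ℕ) {n : WithTop ℕ∞} :
    ContDiff ℝ n (innerMonomial a m k) :=
  ((contDiff_id.inner ℝ contDiff_const).pow m).mul ((contDiff_id.inner ℝ contDiff_id).pow k)

theorem hasFDerivAt_innerMonomial (a y : E) (m k : ℕ) :
    HasFDerivAt (innerMonomial a m k)
      ((m * innerMonomial a (m - 1) k y) • innerSL ℝ a
        + (2 * k * innerMonomial a m (k - 1) y) • innerSL ℝ y) y := by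
  refine (((hasFDerivAt_inner_const_right a y).pow m).mul
    ((hasFDerivAt_inner_self y).pow k)).congr_fderiv ?_
  ext v
  simp only [innerMonomial, add_apply, smul_apply, smul_eq_mul, nsmul_eq_mul, innerSL_apply_apply]
  ring

theorem fderiv_innerMonomial_apply (a y v : E) (m k : ℕ) :
    fderiv ℝ (innerMonomial a m k) y v =
      m * ⟪a, v⟫ * innerMonomial a (m - 1) k y
        + 2 * k * (innerMonomial a m (k - 1) y * ⟪y, v⟫) := by
  rw [(hasFDerivAt_innerMonomial a y m k).fderiv]
  simp only [add_apply, smul_apply, smul_eq_mul, innerSL_apply_apply]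
  ring

/-- The exponents use truncated subtraction, but each term whose exponent truncates has a vanishing
coefficient. -/
theorem fderiv_fderiv_innerMonomial_apply (a x v : E) (m k : ℕ) :
    fderiv ℝ (fun y => fderiv ℝ (innerMonomial a m k) y v) x v =
      m * (m - 1) * ⟪a, v⟫ ^ 2 * innerMonomial a (m - 2) k x
      + 4 * m * k * ⟪a, v⟫ * ⟪x, v⟫ * innerMonomial a (m - 1) (k - 1) x
      + 4 * k * (k - 1) * ⟪x, v⟫ ^ 2 * innerMonomial a m (k - 2) x
      + 2 * k * ⟪v, v⟫ * innerMonomial a m (k - 1) x := by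
  have h := ((hasFDerivAt_innerMonomial a x (m - 1) k).const_mul (m * ⟪a, v⟫)).fun_add
    (((hasFDerivAt_innerMonomial a x m (k - 1)).fun_mul
      (hasFDerivAt_inner_const_right v x)).const_mul (2 * k))
  simp only [fderiv_innerMonomial_apply]
  rw [h.fderiv]
  simp only [add_apply, smul_apply, smul_eq_mul, innerSL_apply_apply, Nat.sub_sub, Nat.reduceAdd]
  linear_combination ⟪a, v⟫ ^ 2 * innerMonomial a (m - 2) k x * Nat.cast_mul_cast_sub_one (R := ℝ) m
    + 4 * ⟪x, v⟫ ^ 2 * innerMonomial a m (k - 2) x * Nat.cast_mul_cast_sub_one (R := ℝ) k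

end InnerMonomial

section Laplacian

variable {E F : Type*} [NormedAddCommGroup E] [InnerProductSpace ℝ E] [FiniteDimensional ℝ E]
  [NormedAddCommGroup F] [NormedSpace ℝ F]

theorem laplacian_eq_sum_fderiv_fderiv {ι : Type*} [Fintype ι] (b : OrthonormalBasis ι ℝ E)
    {f : E → F} {x : E} (hf : ContDiffAt ℝ 2 f x) :
    Δ f x = ∑ i, fderiv ℝ (fun y => fderiv ℝ f y (b i)) x (b i) := by
  have hdf : DifferentiableAt ℝ (fderiv ℝ f) x :=
    (hf.fderiv_right (m := 1) (by norm_num)).differentiableAt one_ne_zero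
  simp only [laplacian_eq_iteratedFDeriv_orthonormalBasis f b, iteratedFDeriv_two_apply]
  congr! 1 with i
  rw [fderiv_clm_apply hdf (differentiableAt_const _)]
  simp

theorem laplacian_fun_add {f g : E → F} {x : E} (hf : ContDiffAt ℝ 2 f x)
    (hg : ContDiffAt ℝ 2 g x) : Δ (fun y => f y + g y) x = Δ f x + Δ g x :=
  hf.laplacian_add hg

theorem laplacian_fun_sub {f g : E → F} {x : E} (hf : ContDiffAt ℝ 2 f x)
    (hg : ContDiffAt ℝ 2 g x) : Δ (fun y => f y - g y) x = Δ f x - Δ g x :=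
  hf.laplacian_sub hg

theorem laplacian_fun_const_mul (c : ℝ) {f : E → ℝ} {x : E} (hf : ContDiffAt ℝ 2 f x) :
    Δ (fun y => c * f y) x = c * Δ f x :=
  laplacian_smul c hf

theorem laplacian_innerMonomial (a x : E) (m k : ℕ) :
    Δ (innerMonomial a m k) x =
      m * (m - 1) * ⟪a, a⟫ * innerMonomial a (m - 2) k x
      + 4 * m * k * ⟪x, a⟫ * innerMonomial a (m - 1) (k - 1) x
      + 4 * k * (k - 1) * ⟪x, x⟫ * innerMonomial a m (k - 2) x
      + 2 * k * finrank ℝ E * innerMonomial a m (k - 1) x := by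
  set b := stdOrthonormalBasis ℝ E
  rw [laplacian_eq_sum_fderiv_fderiv b (contDiff_innerMonomial a m k).contDiffAt]
  have hsummand : ∀ i, fderiv ℝ (fun y => fderiv ℝ (innerMonomial a m k) y (b i)) x (b i) =
      m * (m - 1) * innerMonomial a (m - 2) k x * (⟪a, b i⟫ * ⟪a, b i⟫)
      + 4 * m * k * innerMonomial a (m - 1) (k - 1) x * (⟪a, b i⟫ * ⟪x, b i⟫)
      + 4 * k * (k - 1) * innerMonomial a m (k - 2) x * (⟪x, b i⟫ * ⟪x, b i⟫)
      + 2 * k * innerMonomial a m (k - 1) x := fun i => by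
    rw [fderiv_fderiv_innerMonomial_apply, b.inner_eq_one]
    ring
  simp only [hsummand, Finset.sum_add_distrib, ← Finset.mul_sum, b.sum_inner_mul_inner_real,
    Finset.sum_const, Finset.card_univ, Fintype.card_fin, nsmul_eq_mul, real_inner_comm a x]
  ring

end Laplacian

/-- the degree-8 polynomial on ℝ⁴⁸ is harmonic for every fixed x'. -/
theorem harmonic_deg8_dim48 (x' : EuclideanSpace ℝ (Fin 48)) :
    let P : EuclideanSpace ℝ (Fin 48) → ℝ := fun x =>
      ⟪x, x'⟫ ^ 8 - (7 / 15) * ⟪x, x'⟫ ^ 6 * ⟪x', x'⟫ * ⟪x, x⟫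
        + (7 / 116) * ⟪x, x'⟫ ^ 4 * ⟪x', x'⟫ ^ 2 * ⟪x, x⟫ ^ 2
        - (1 / 464) * ⟪x, x'⟫ ^ 2 * ⟪x', x'⟫ ^ 3 * ⟪x, x⟫ ^ 3
        + (1 / 100224) * ⟪x', x'⟫ ^ 4 * ⟪x, x⟫ ^ 4
    ∀ x : EuclideanSpace ℝ (Fin 48),
      (∑ i : Fin 48,
        fderiv ℝ (fun y => fderiv ℝ P y (EuclideanSpace.single i 1)) x
          (EuclideanSpace.single i 1)) = 0 := by
  intro P x
  have hP : P = fun y => innerMonomial x' 8 0 y - 7 / 15 * ⟪x', x'⟫ * innerMonomial x' 6 1 y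
      + 7 / 116 * ⟪x', x'⟫ ^ 2 * innerMonomial x' 4 2 y
      - 1 / 464 * ⟪x', x'⟫ ^ 3 * innerMonomial x' 2 3 y
      + 1 / 100224 * ⟪x', x'⟫ ^ 4 * innerMonomial x' 0 4 y := by
    funext y
    simp only [P, innerMonomial]
    ring
  have hP_smooth : ContDiffAt ℝ 2 P x := hP ▸ by fun_prop
  have hΔ := laplacian_eq_sum_fderiv_fderiv (EuclideanSpace.basisFun (Fin 48) ℝ) hP_smooth
  simp only [EuclideanSpace.basisFun_apply] at hΔ
  rw [← hΔ, hP, laplacian_fun_add (by fun_prop) (by fun_prop),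
    laplacian_fun_sub (by fun_prop) (by fun_prop), laplacian_fun_add (by fun_prop) (by fun_prop),
    laplacian_fun_sub (by fun_prop) (by fun_prop), laplacian_fun_const_mul _ (by fun_prop),
    laplacian_fun_const_mul _ (by fun_prop), laplacian_fun_const_mul _ (by fun_prop),
    laplacian_fun_const_mul _ (by fun_prop)]
  simp only [laplacian_innerMonomial, finrank_euclideanSpace_fin, innerMonomial, Nat.reduceSub,
    Nat.cast_ofNat, Nat.cast_zero, Nat.cast_one]
  ring
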